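/- Let ℏ, z ∈ ℂ with ℏ ≠ 0, and set u := (z + ℏ/2)/(2ℏ). Assume that neither u nor u + 1/2 is a nonpositive integer (i.e. of the form −m with m ∈ ℕ). Then G(z) · G(z+ℏ) = 1/(z + ℏ/2); equivalently, G(z)⁻¹ · G(z+ℏ)⁻¹ = z + ℏ/2. -/

import Mathlib

open Complex

/-- The normalizing factor `G(z)` relating the 't Hooft line to Baxter's Q-operator,
built from the complex Gamma function and a principal-branch complex power.
(Here the dependence on ℏ is made explicit.) -/
noncomputable def Gnorm (ℏ z : ℂ) : ℂ :=
  (2*ℏ) ^ (-(1/2 : ℂ)) * Complex.Gamma ((z + ℏ/2) / (2*ℏ)) /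
    Complex.Gamma ((z + 3*ℏ/2) / (2*ℏ))

/-!
In the variable `u = (z + ℏ/2)/(2ℏ)`, the shift `z ↦ z + ℏ` is `u ↦ u + 1/2`, so
`G(z) = (2ℏ)^(-1/2) Γ(u)/Γ(u + 1/2)` and `G(z + ℏ) = (2ℏ)^(-1/2) Γ(u + 1/2)/Γ(u + 1)`.
In the product the middle Gamma factor cancels, the two square roots give `(2ℏ)⁻¹`, and
`Γ(u)/Γ(u + 1) = 1/u` by the functional equation, leaving `1/(2ℏu) = 1/(z + ℏ/2)`.
-/

namespace Complex

theorem Gamma_div_Gamma_add_one {u : ℂ} (hu : ∀ m : ℕ, u ≠ -m) :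
    Gamma u / Gamma (u + 1) = u⁻¹ := by
  have hu0 : u ≠ 0 := by simpa using hu 0
  rw [Gamma_add_one u hu0, div_mul_cancel_right₀ (Gamma_ne_zero hu)]

theorem cpow_neg_half_mul_self {x : ℂ} (hx : x ≠ 0) :
    x ^ (-(1/2 : ℂ)) * x ^ (-(1/2 : ℂ)) = x⁻¹ := by
  rw [← cpow_add _ _ hx, show -(1/2 : ℂ) + -(1/2) = -1 by norm_num, cpow_neg_one]

end Complex

theorem Gnorm_eq {ℏ : ℂ} (hℏ : ℏ ≠ 0) (z : ℂ) :
    Gnorm ℏ z = (2*ℏ) ^ (-(1/2 : ℂ)) *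
      (Gamma ((z + ℏ/2) / (2*ℏ)) / Gamma ((z + ℏ/2) / (2*ℏ) + 1/2)) := by
  rw [Gnorm, mul_div_assoc]
  congr 3
  field_simp
  ring

theorem Gnorm_add_self_eq {ℏ : ℂ} (hℏ : ℏ ≠ 0) (z : ℂ) :
    Gnorm ℏ (z + ℏ) = (2*ℏ) ^ (-(1/2 : ℂ)) *
      (Gamma ((z + ℏ/2) / (2*ℏ) + 1/2) / Gamma ((z + ℏ/2) / (2*ℏ) + 1)) := by
  rw [Gnorm, mul_div_assoc]
  congr 3 <;> field_simp <;> ring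

/-- the difference equation `G(z) G(z+ℏ) = 1/(z + ℏ/2)`, equivalently
`G(z)⁻¹ G(z+ℏ)⁻¹ = z + ℏ/2`. -/
theorem Gnorm_difference_equation (ℏ z : ℂ) (hℏ : ℏ ≠ 0)
    (u : ℂ) (hu : u = (z + ℏ/2) / (2*ℏ))
    (h1 : ∀ m : ℕ, u ≠ -(m : ℂ)) (h2 : ∀ m : ℕ, u + 1/2 ≠ -(m : ℂ)) :
    Gnorm ℏ z * Gnorm ℏ (z + ℏ) = 1 / (z + ℏ/2) ∧
    (Gnorm ℏ z)⁻¹ * (Gnorm ℏ (z + ℏ))⁻¹ = z + ℏ/2 := by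
  have h2ℏ : 2*ℏ ≠ 0 := mul_ne_zero two_ne_zero hℏ
  have hz : z + ℏ/2 = 2*ℏ*u := by rw [hu, mul_div_cancel₀ _ h2ℏ]
  have product : Gnorm ℏ z * Gnorm ℏ (z + ℏ) = 1 / (z + ℏ/2) := by
    rw [Gnorm_eq hℏ, Gnorm_add_self_eq hℏ, ← hu,
      mul_mul_mul_comm, cpow_neg_half_mul_self h2ℏ,
      div_mul_div_cancel₀ (Gamma_ne_zero h2), Gamma_div_Gamma_add_one h1,
      hz, one_div, mul_inv (2*ℏ) u]
  refine ⟨product, ?_⟩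
  rw [← mul_inv, product, one_div, inv_inv]
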